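/- arXiv:2410.09446 — 2 statements merged into one kernel-verified Lean document; each statement's English description precedes it below -/
import Mathlib

section
/- Let T be a bounded, linear, positive operator on L²(G, ℂ^{s×r}) that is adjointable with respect to the matrix-valued inner product, and let {E_k}_{k∈ℕ} be a matrix-valued orthonormal basis for L²(G, ℂ^{s×r}). Then for every n ∈ ℕ, the sequence {(I + T + T² + ⋯ + Tⁿ) E_k}_{k∈ℕ} = {(∑_{j=0}^{n} T^j) E_k}_{k∈ℕ} is a matrix-valued Riesz basis for L²(G, ℂ^{s×r}), where I denotes the identity operator and T^j the j-fold composition of T. -/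
open MeasureTheory Filter
open scoped ENNReal ComplexOrder

noncomputable section

/-- The space `L²(G, ℂ^{s×r})` of square-integrable `ℂ^{s×r}`-valued functions on `G`,
realized as an `Lp`-space with values in `EuclideanSpace ℂ (Fin s × Fin r)`
(so that the norm is the Frobenius norm). -/
abbrev MatL2 {G : Type*} [MeasurableSpace G] (μ : Measure G) (s r : ℕ) : Type _ :=
  Lp (α := G) (EuclideanSpace ℂ (Fin s × Fin r)) 2 μ

/-- The matrix-valued inner product `⟨f, g⟩ = ∫_G f(x) g(x)* dμ(x)`, an `s × s` matrix. -/
def matInner {G : Type*} [MeasurableSpace G] {μ : Measure G} {s r : ℕ}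
    (f g : MatL2 μ s r) : Matrix (Fin s) (Fin s) ℂ :=
  Matrix.of fun i j => ∫ x, ∑ n : Fin r, f x (i, n) * (starRingEnd ℂ) (g x (j, n)) ∂μ

/-- Left multiplication by the matrix `A : ℂ^{s×s}` as a continuous linear map on
`ℂ^{s×r} ≅ EuclideanSpace ℂ (Fin s × Fin r)`; it is given by the matrix `A ⊗ I`. -/
def matMulCLM (s r : ℕ) (A : Matrix (Fin s) (Fin s) ℂ) :
    EuclideanSpace ℂ (Fin s × Fin r) →L[ℂ] EuclideanSpace ℂ (Fin s × Fin r) :=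
  LinearMap.toContinuousLinearMap
    (Matrix.toEuclideanLin (Matrix.of fun p q : Fin s × Fin r =>
      if p.2 = q.2 then A p.1 q.1 else 0))

/-- The action of a matrix `A : ℂ^{s×s}` on `h ∈ L²(G, ℂ^{s×r})` by pointwise left
multiplication, `(A h)(x) = A · h(x)`. -/
def matSMul {G : Type*} [MeasurableSpace G] {μ : Measure G} {s r : ℕ}
    (A : Matrix (Fin s) (Fin s) ℂ) (f : MatL2 μ s r) : MatL2 μ s r :=
  (matMulCLM s r A).compLp f

/-- A bounded linear operator `U` on `L²(G, ℂ^{s×r})` is adjointable with respect to the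
matrix-valued inner product if `⟨U f, g⟩ = ⟨f, U* g⟩` (as `s × s` matrices) for all `f, g`,
where `U*` is the Hilbert adjoint of `U`. -/
def MatAdjointable {G : Type*} [MeasurableSpace G] {μ : Measure G} {s r : ℕ}
    (U : MatL2 μ s r →L[ℂ] MatL2 μ s r) : Prop :=
  ∀ f g : MatL2 μ s r,
    matInner (U f) g = matInner f (ContinuousLinearMap.adjoint U g)

/-- A matrix-valued orthonormal basis of `L²(G, ℂ^{s×r})`: `⟨E k, E j⟩ = δ_{kj} I` and
every `f` has the expansion `f = ∑_k ⟨f, E k⟩ E k`, the series converging in norm. -/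
def IsMatONB {G : Type*} [MeasurableSpace G] {μ : Measure G} {s r : ℕ}
    (E : ℕ → MatL2 μ s r) : Prop :=
  (∀ k j : ℕ, matInner (E k) (E j) =
      if k = j then (1 : Matrix (Fin s) (Fin s) ℂ) else (0 : Matrix (Fin s) (Fin s) ℂ)) ∧
  (∀ f : MatL2 μ s r,
    Tendsto (fun N : ℕ => ∑ k ∈ Finset.range N, matSMul (matInner f (E k)) (E k))
      atTop (nhds f))

/-- A matrix-valued Riesz basis of `L²(G, ℂ^{s×r})`: the image of a matrix-valued
orthonormal basis under a bounded, linear, bijective operator that is adjointable with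
respect to the matrix-valued inner product. -/
def IsMatRieszBasis {G : Type*} [MeasurableSpace G] {μ : Measure G} {s r : ℕ}
    (F : ℕ → MatL2 μ s r) : Prop :=
  ∃ (E : ℕ → MatL2 μ s r) (V : MatL2 μ s r →L[ℂ] MatL2 μ s r),
    IsMatONB E ∧ Function.Bijective V ∧ MatAdjointable V ∧ ∀ k : ℕ, F k = V (E k)

/-- The Frobenius norm of an `s × s` complex matrix. -/
def frobNorm {s : ℕ} (A : Matrix (Fin s) (Fin s) ℂ) : ℝ :=
  Real.sqrt (∑ i : Fin s, ∑ j : Fin s, ‖A i j‖ ^ 2)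

end

/-! In the C⋆-algebra of bounded operators, `0 ≤ T` gives `0 ≤ T ^ j`, so
`∑_{j ≤ n} T ^ j ≥ 1` is invertible. The operators that are adjointable for the matrix-valued
inner product form a subsemiring, because `matInner` is biadditive and `(U V)† = V† U†`; it
contains `T`, hence also the geometric sum. -/

open scoped InnerProductSpace

lemma CStarAlgebra.isUnit_geom_sum_of_nonneg {A : Type*} [CStarAlgebra A] [PartialOrder A]
    [StarOrderedRing A] {a : A} (ha : 0 ≤ a) (n : ℕ) :
    IsUnit (∑ j ∈ Finset.range (n + 1), a ^ j) := by
  refine CStarAlgebra.isUnit_of_le 1 ?_ isStrictlyPositive_one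
  rw [Finset.sum_range_succ', pow_zero, le_add_iff_nonneg_left]
  exact Finset.sum_nonneg fun j _ => CStarAlgebra.pow_nonneg ha (j + 1)

section MatInner

variable {G : Type*} [MeasurableSpace G] {μ : Measure G} {s r : ℕ}

noncomputable def rowCLM (s r : ℕ) (i : Fin s) :
    EuclideanSpace ℂ (Fin s × Fin r) →L[ℂ] EuclideanSpace ℂ (Fin r) :=
  LinearMap.toContinuousLinearMap
    { toFun := fun v => WithLp.toLp 2 fun n => v (i, n)
      map_add' := fun _ _ => rfl
      map_smul' := fun _ _ => rfl }

lemma matInner_apply_eq_inner (f g : MatL2 μ s r) (i j : Fin s) :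
    matInner f g i j = ⟪(rowCLM s r j).compLpₗ 2 μ g, (rowCLM s r i).compLpₗ 2 μ f⟫_ℂ := by
  rw [L2.inner_def]
  refine integral_congr_ae ?_
  filter_upwards [(rowCLM s r j).coeFn_compLp g, (rowCLM s r i).coeFn_compLp f] with x hg hf
  simp only [ContinuousLinearMap.compLpₗ_apply, hf, hg, PiLp.inner_apply, RCLike.inner_apply]
  rfl

lemma matInner_add_left (f f' g : MatL2 μ s r) :
    matInner (f + f') g = matInner f g + matInner f' g := by
  ext i j
  simp only [Matrix.add_apply, matInner_apply_eq_inner, map_add, inner_add_right]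

lemma matInner_add_right (f g g' : MatL2 μ s r) :
    matInner f (g + g') = matInner f g + matInner f g' := by
  ext i j
  simp only [Matrix.add_apply, matInner_apply_eq_inner, map_add, inner_add_left]

lemma matInner_zero_left (g : MatL2 μ s r) : matInner 0 g = 0 := by
  ext i j
  simp only [Matrix.zero_apply, matInner_apply_eq_inner, map_zero, inner_zero_right]

lemma matInner_zero_right (f : MatL2 μ s r) : matInner f 0 = 0 := by
  ext i j
  simp only [Matrix.zero_apply, matInner_apply_eq_inner, map_zero, inner_zero_left]

variable (μ s r) in
def matAdjointableSubsemiring : Subsemiring (MatL2 μ s r →L[ℂ] MatL2 μ s r) where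
  carrier := {U | MatAdjointable U}
  one_mem' f g := by simp [ContinuousLinearMap.adjoint_one]
  mul_mem' {U V} hU hV f g := by
    rw [ContinuousLinearMap.mul_def, ContinuousLinearMap.adjoint_comp]
    exact (hU (V f) g).trans (hV f _)
  zero_mem' f g := by simp [matInner_zero_left, matInner_zero_right]
  add_mem' {U V} hU hV f g := by
    simp only [add_apply, map_add, matInner_add_left, matInner_add_right, hU f g, hV f g]

end MatInner

theorem stmt_7_general {G : Type*} [MeasurableSpace G]
    (μ : MeasureTheory.Measure G) (s r : ℕ)
    (T : MatL2 μ s r →L[ℂ] MatL2 μ s r)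
    (hpos : T.IsPositive) (hadj : MatAdjointable T)
    (E : ℕ → MatL2 μ s r) (hE : IsMatONB E) :
    ∀ n : ℕ,
      IsMatRieszBasis (fun k => (∑ j ∈ Finset.range (n + 1), T ^ j) (E k)) := by
  intro n
  refine ⟨E, _, hE, ?_, ?_, fun k => rfl⟩
  · exact ContinuousLinearMap.isUnit_iff_bijective.mp <| CStarAlgebra.isUnit_geom_sum_of_nonneg
      ((ContinuousLinearMap.nonneg_iff_isPositive T).mpr hpos) n
  · exact sum_mem fun j _ => pow_mem (S := matAdjointableSubsemiring μ s r) hadj j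

theorem stmt_7 {G : Type*} [MeasurableSpace G] [TopologicalSpace G] [BorelSpace G]
    [AddCommGroup G] [IsTopologicalAddGroup G] [LocallyCompactSpace G]
    [SigmaCompactSpace G] [TopologicalSpace.MetrizableSpace G]
    (μ : MeasureTheory.Measure G) [μ.IsAddHaarMeasure] (s r : ℕ) (hs : 0 < s) (hr : 0 < r)
    (T : MatL2 μ s r →L[ℂ] MatL2 μ s r)
    (hpos : T.IsPositive) (hadj : MatAdjointable T)
    (E : ℕ → MatL2 μ s r) (hE : IsMatONB E) :
    ∀ n : ℕ,
      IsMatRieszBasis (fun k => (∑ j ∈ Finset.range (n + 1), T ^ j) (E k)) :=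
  stmt_7_general μ s r T hpos hadj E hE
end

section
/- Let T be a bounded linear operator on L²(G, ℂ^{s×r}) that is adjointable with respect to the matrix-valued inner product, with T + T* ≠ 0 and T − T* ≠ 0, and let {E_k}_{k∈ℕ} be a matrix-valued orthonormal basis for L²(G, ℂ^{s×r}). Let Q₁ be the positive square root of ‖T+T*‖²I − (T+T*)² (a bounded positive operator with Q₁² = ‖T+T*‖²I − (T+T*)²) and Q₂ the positive square root of ‖T−T*‖²I + (T−T*)² (a bounded positive operator with Q₂² = ‖T−T*‖²I + (T−T*)²). Define Ω₁ = (1/‖T+T*‖)(T + T* + iQ₁), Ω₂ = (1/‖T+T*‖)(T + T* − iQ₁), Ω₃ = (−i/‖T−T*‖)(T − T* − Q₂), and Ω₄ = (−i/‖T−T*‖)(T − T* + Q₂). Then for each i ∈ {1, 2, 3, 4}, the sequence {Ω_i E_k}_{k∈ℕ} is a matrix-valued Riesz basis for L²(G, ℂ^{s×r}). -/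
open MeasureTheory Filter
open scoped ENNReal ComplexOrder

/-!
An operator is adjointable for the matrix-valued inner product exactly when its adjoint, hence
the operator itself, commutes with the pointwise action of every matrix unit `e_{ij}`; so these
operators form the star subalgebra `C` centralizing the `e_{ij}`. `A = T + T*` and `-i B` are
self-adjoint elements of `C`, and a positive square root of an element of `C` (here of
`‖A‖² - A²` and of `‖B‖² - (-i B)²`) lies in `C` and commutes with everything its square commutes
with, by the continuous functional calculus. Hence each `Ω = c⁻¹ (a ± i q)` with `a² + q² = c²`
is a unitary in `C`: a bijection that is adjointable, mapping `E` to a matrix-valued Riesz basis.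
-/

open ContinuousLinearMap
open scoped InnerProductSpace

section MatrixUnits

variable {G : Type*} [MeasurableSpace G] {μ : Measure G} {s r : ℕ}

lemma matMulCLM_single_apply (i j : Fin s) (u : EuclideanSpace ℂ (Fin s × Fin r))
    (p : Fin s × Fin r) :
    matMulCLM s r (Matrix.single i j 1) u p = if p.1 = i then u (j, p.2) else 0 := by
  simp only [matMulCLM, LinearMap.coe_toContinuousLinearMap', Matrix.toLpLin_apply]
  change ∑ q : Fin s × Fin r, (if p.2 = q.2 then Matrix.single i j 1 p.1 q.1 else 0) * u q = _
  rw [Fintype.sum_prod_type]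
  simp [Matrix.single, ite_and, eq_comm]

variable (μ s r) in
noncomputable def matUnitL2 (i j : Fin s) : MatL2 μ s r →L[ℂ] MatL2 μ s r :=
  (matMulCLM s r (Matrix.single i j 1)).compLpL 2 μ

lemma inner_matUnitL2_left (i j : Fin s) (g f : MatL2 μ s r) :
    ⟪matUnitL2 μ s r i j g, f⟫_ℂ =
      ∫ x, ∑ n : Fin r, f x (i, n) * (starRingEnd ℂ) (g x (j, n)) ∂μ := by
  rw [L2.inner_def]
  refine integral_congr_ae ?_
  filter_upwards [coeFn_compLpL (p := 2) (μ := μ) (matMulCLM s r (Matrix.single i j 1)) g]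
    with x hx
  change ⟪(matUnitL2 μ s r i j g : MatL2 μ s r) x, f x⟫_ℂ = _
  rw [show (matUnitL2 μ s r i j g : G → EuclideanSpace ℂ (Fin s × Fin r)) x
      = matMulCLM s r (Matrix.single i j 1) (g x) from hx, PiLp.inner_apply,
    Fintype.sum_prod_type]
  simp [matMulCLM_single_apply, RCLike.inner_apply, apply_ite, mul_comm]

lemma matInner_apply (f g : MatL2 μ s r) (i j : Fin s) :
    matInner f g i j = ⟪matUnitL2 μ s r i j g, f⟫_ℂ := by
  rw [inner_matUnitL2_left, matInner, Matrix.of_apply]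

lemma adjoint_matUnitL2 (i j : Fin s) :
    adjoint (matUnitL2 μ s r i j) = matUnitL2 μ s r j i := by
  refine ((eq_adjoint_iff _ _).2 fun f g => ?_).symm
  rw [inner_matUnitL2_left, ← inner_conj_symm f, inner_matUnitL2_left, ← integral_conj]
  simp [mul_comm]

lemma matAdjointable_iff_forall_commute_adjoint (U : MatL2 μ s r →L[ℂ] MatL2 μ s r) :
    MatAdjointable U ↔ ∀ i j, Commute (matUnitL2 μ s r i j) (adjoint U) := by
  simp only [MatAdjointable, ← Matrix.ext_iff, matInner_apply, ← adjoint_inner_left,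
    commute_iff_eq, ContinuousLinearMap.ext_iff]
  exact ⟨fun h i j g => ext_inner_right ℂ fun f => (h f g i j).symm,
    fun h f g i j => congrArg (⟪·, f⟫_ℂ) (h i j g).symm⟩

variable (μ s r) in
def matUnits : Set (MatL2 μ s r →L[ℂ] MatL2 μ s r) :=
  Set.range fun p : Fin s × Fin s => matUnitL2 μ s r p.1 p.2

lemma matAdjointable_iff_mem_centralizer (U : MatL2 μ s r →L[ℂ] MatL2 μ s r) :
    MatAdjointable U ↔ U ∈ StarSubalgebra.centralizer ℂ (matUnits μ s r) := by
  rw [matAdjointable_iff_forall_commute_adjoint, ← star_mem_iff,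
    StarSubalgebra.mem_centralizer_iff]
  simp only [matUnits, Set.forall_mem_range, star_eq_adjoint, adjoint_matUnitL2, Prod.forall,
    commute_iff_eq]
  exact ⟨fun h i j => ⟨h i j, h j i⟩, fun h i j => (h i j).1⟩

end MatrixUnits

section StarAlgebra

variable {A : Type*} [CStarAlgebra A] [PartialOrder A] [StarOrderedRing A]

lemma Commute.of_mul_self_left {q b : A} (hq : 0 ≤ q) (h : Commute (q * q) b) :
    Commute q b := by
  simpa [← CFC.sqrt_eq_cfc, CFC.sqrt_mul_self q hq] using h.cfc_nnreal NNReal.sqrt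

lemma StarSubalgebra.mem_centralizer_of_mul_self_mem {S : Set A} {q : A} (hq : 0 ≤ q)
    (h : q * q ∈ StarSubalgebra.centralizer ℂ S) : q ∈ StarSubalgebra.centralizer ℂ S := by
  rw [StarSubalgebra.mem_centralizer_iff] at h ⊢
  have hcomm : ∀ x, x * (q * q) = q * q * x → x * q = q * x := fun x hx =>
    (Commute.of_mul_self_left hq (Commute.symm hx)).symm.eq
  exact fun g hg => ⟨hcomm g (h g hg).1, hcomm (star g) (h g hg).2⟩

end StarAlgebra

section Unitary

variable {R : Type*} [Ring R] [Algebra ℂ R]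

open Complex

lemma sub_I_smul_mul_add_I_smul {a q : R} (h : Commute a q) :
    (a - I • q) * (a + I • q) = a * a + q * q := by
  simp only [mul_add, sub_mul, smul_mul_assoc, mul_smul_comm, h.eq]
  match_scalars <;> simp

lemma add_I_smul_mul_sub_I_smul {a q : R} (h : Commute a q) :
    (a + I • q) * (a - I • q) = a * a + q * q := by
  simpa [sub_eq_add_neg] using sub_I_smul_mul_add_I_smul h.neg_right

lemma smul_add_I_smul_mem_unitary [StarRing R] [StarModule ℂ R] {a q : R}
    (ha : IsSelfAdjoint a) (hq : IsSelfAdjoint q) (haq : Commute a q) {c : ℝ} (hc : c ≠ 0)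
    (h : a * a + q * q = ((c : ℂ) ^ 2) • 1) :
    (c : ℂ)⁻¹ • (a + I • q) ∈ unitary R := by
  have hstar : star (a + I • q) = a - I • q := by
    simp [star_smul, ha.star_eq, hq.star_eq, sub_eq_add_neg]
  have hc_star : star ((c : ℂ)⁻¹) = (c : ℂ)⁻¹ := by simp [Complex.conj_ofReal]
  have hc_sq : (c : ℂ)⁻¹ * (c : ℂ)⁻¹ * (c : ℂ) ^ 2 = 1 := by field_simp
  rw [Unitary.mem_iff, star_smul, hc_star, hstar, smul_mul_smul_comm, smul_mul_smul_comm,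
    sub_I_smul_mul_add_I_smul haq, add_I_smul_mul_sub_I_smul haq, h, smul_smul, hc_sq, one_smul]
  exact ⟨rfl, rfl⟩

end Unitary

section RieszBasis

variable {G : Type*} [MeasurableSpace G] {μ : Measure G} {s r : ℕ}

lemma isMatRieszBasis_of_mem_unitary {E : ℕ → MatL2 μ s r} (hE : IsMatONB E)
    {Ω : MatL2 μ s r →L[ℂ] MatL2 μ s r} (hΩ : Ω ∈ unitary (MatL2 μ s r →L[ℂ] MatL2 μ s r))
    (hΩadj : MatAdjointable Ω) : IsMatRieszBasis fun k => Ω (E k) :=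
  ⟨E, Ω, hE, (Unitary.linearIsometryEquiv ⟨Ω, hΩ⟩).bijective, hΩadj, fun _ => rfl⟩

open Complex in
lemma isMatRieszBasis_smul_add_I_smul {E : ℕ → MatL2 μ s r} (hE : IsMatONB E)
    {a q : MatL2 μ s r →L[ℂ] MatL2 μ s r} (ha : IsSelfAdjoint a) (hq : IsSelfAdjoint q)
    (haq : Commute a q) (ha_mem : a ∈ StarSubalgebra.centralizer ℂ (matUnits μ s r))
    (hq_mem : q ∈ StarSubalgebra.centralizer ℂ (matUnits μ s r)) {c : ℝ} (hc : c ≠ 0)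
    (h : a * a + q * q = ((c : ℂ) ^ 2) • 1) :
    IsMatRieszBasis fun k => ((c : ℂ)⁻¹ • (a + I • q)) (E k) :=
  isMatRieszBasis_of_mem_unitary hE (smul_add_I_smul_mem_unitary ha hq haq hc h)
    ((matAdjointable_iff_mem_centralizer _).2
      (StarSubalgebra.smul_mem _ (add_mem ha_mem (StarSubalgebra.smul_mem _ hq_mem _)) _))

open Complex in
lemma isMatRieszBasis_smul_add_I_smul_of_mul_self_eq {E : ℕ → MatL2 μ s r} (hE : IsMatONB E)
    {a q : MatL2 μ s r →L[ℂ] MatL2 μ s r} (ha : IsSelfAdjoint a)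
    (ha_mem : a ∈ StarSubalgebra.centralizer ℂ (matUnits μ s r)) (hq : 0 ≤ q) {c : ℝ}
    (hc : c ≠ 0) (hq_sq : q * q = ((c : ℂ) ^ 2) • 1 - a * a) :
    (IsMatRieszBasis fun k => ((c : ℂ)⁻¹ • (a + I • q)) (E k)) ∧
      IsMatRieszBasis fun k => ((c : ℂ)⁻¹ • (a - I • q)) (E k) := by
  set C := StarSubalgebra.centralizer ℂ (matUnits μ s r)
  have hq_mem : q ∈ C := StarSubalgebra.mem_centralizer_of_mul_self_mem hq
    (hq_sq ▸ sub_mem (C.smul_mem (one_mem C) _) (mul_mem ha_mem ha_mem))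
  have haq : Commute a q := (Commute.of_mul_self_left hq
    (hq_sq ▸ ((Commute.one_left a).smul_left _).sub_left ((Commute.refl a).mul_left rfl))).symm
  have h : a * a + q * q = ((c : ℂ) ^ 2) • 1 := by rw [hq_sq]; abel
  refine ⟨isMatRieszBasis_smul_add_I_smul hE ha hq.isSelfAdjoint haq ha_mem hq_mem hc h, ?_⟩
  simpa [sub_eq_add_neg] using isMatRieszBasis_smul_add_I_smul hE ha hq.isSelfAdjoint.neg
    haq.neg_right ha_mem (neg_mem hq_mem) hc (by simpa using h)

end RieszBasis

theorem stmt_17_general {G : Type*} [MeasurableSpace G]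
    (μ : MeasureTheory.Measure G) (s r : ℕ)
    (T Q₁ Q₂ A B : MatL2 μ s r →L[ℂ] MatL2 μ s r)
    (hTadj : MatAdjointable T)
    (hA : A = T + ContinuousLinearMap.adjoint T)
    (hB : B = T - ContinuousLinearMap.adjoint T)
    (hA0 : A ≠ 0) (hB0 : B ≠ 0)
    (hQ1pos : Q₁.IsPositive)
    (hQ1 : Q₁ * Q₁ = ((‖A‖ : ℂ) ^ 2) • (1 : MatL2 μ s r →L[ℂ] MatL2 μ s r) - A ^ 2)
    (hQ2pos : Q₂.IsPositive)
    (hQ2 : Q₂ * Q₂ = ((‖B‖ : ℂ) ^ 2) • (1 : MatL2 μ s r →L[ℂ] MatL2 μ s r) + B ^ 2)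
    (E : ℕ → MatL2 μ s r) (hE : IsMatONB E) :
    IsMatRieszBasis (fun k => ((‖A‖ : ℂ)⁻¹ • (A + Complex.I • Q₁)) (E k)) ∧
      IsMatRieszBasis (fun k => ((‖A‖ : ℂ)⁻¹ • (A - Complex.I • Q₁)) (E k)) ∧
      IsMatRieszBasis (fun k => ((-Complex.I * (‖B‖ : ℂ)⁻¹) • (B - Q₂)) (E k)) ∧
      IsMatRieszBasis (fun k => ((-Complex.I * (‖B‖ : ℂ)⁻¹) • (B + Q₂)) (E k)) := by
  set C := StarSubalgebra.centralizer ℂ (matUnits μ s r)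
  have hT : T ∈ C := (matAdjointable_iff_mem_centralizer T).1 hTadj
  have hA_mem : A ∈ C := hA ▸ add_mem hT (star_mem hT)
  have hiB_mem : -Complex.I • B ∈ C := C.smul_mem (hB ▸ sub_mem hT (star_mem hT)) _
  have hA_sa : IsSelfAdjoint A := hA ▸ IsSelfAdjoint.add_star_self T
  -- `Ω₃` and `Ω₄` are built like `Ω₁` and `Ω₂`, from the self-adjoint `-i B` in place of `A`.
  have hiB_sa : IsSelfAdjoint (-Complex.I • B) := by
    have hB_star : star B = -B := by simp [hB, star_eq_adjoint]
    simp [IsSelfAdjoint, star_smul, hB_star]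
  have hiB_sq : Q₂ * Q₂ = ((‖B‖ : ℂ) ^ 2) • 1 - (-Complex.I • B) * (-Complex.I • B) := by
    rw [hQ2, smul_mul_smul_comm, neg_mul_neg, Complex.I_mul_I, ← sq B]
    module
  obtain ⟨hΩ₁, hΩ₂⟩ := isMatRieszBasis_smul_add_I_smul_of_mul_self_eq hE hA_sa hA_mem
    ((nonneg_iff_isPositive Q₁).2 hQ1pos) (norm_ne_zero_iff.2 hA0) (by rw [hQ1, sq A])
  obtain ⟨hΩ₃, hΩ₄⟩ := isMatRieszBasis_smul_add_I_smul_of_mul_self_eq hE hiB_sa hiB_mem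
    ((nonneg_iff_isPositive Q₂).2 hQ2pos) (norm_ne_zero_iff.2 hB0) hiB_sq
  refine ⟨hΩ₁, hΩ₂, ?_, ?_⟩
  · convert hΩ₃ using 3; module
  · convert hΩ₄ using 3; module

theorem stmt_17 {G : Type*} [MeasurableSpace G] [TopologicalSpace G] [BorelSpace G]
    [AddCommGroup G] [IsTopologicalAddGroup G] [LocallyCompactSpace G]
    [SigmaCompactSpace G] [TopologicalSpace.MetrizableSpace G]
    (μ : MeasureTheory.Measure G) [μ.IsAddHaarMeasure] (s r : ℕ) (hs : 0 < s) (hr : 0 < r)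
    (T Q₁ Q₂ A B : MatL2 μ s r →L[ℂ] MatL2 μ s r)
    (hTadj : MatAdjointable T)
    (hA : A = T + ContinuousLinearMap.adjoint T)
    (hB : B = T - ContinuousLinearMap.adjoint T)
    (hA0 : A ≠ 0) (hB0 : B ≠ 0)
    (hQ1pos : Q₁.IsPositive)
    (hQ1 : Q₁ * Q₁ = ((‖A‖ : ℂ) ^ 2) • (1 : MatL2 μ s r →L[ℂ] MatL2 μ s r) - A ^ 2)
    (hQ2pos : Q₂.IsPositive)
    (hQ2 : Q₂ * Q₂ = ((‖B‖ : ℂ) ^ 2) • (1 : MatL2 μ s r →L[ℂ] MatL2 μ s r) + B ^ 2)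
    (E : ℕ → MatL2 μ s r) (hE : IsMatONB E) :
    IsMatRieszBasis (fun k => ((‖A‖ : ℂ)⁻¹ • (A + Complex.I • Q₁)) (E k)) ∧
      IsMatRieszBasis (fun k => ((‖A‖ : ℂ)⁻¹ • (A - Complex.I • Q₁)) (E k)) ∧
      IsMatRieszBasis (fun k => ((-Complex.I * (‖B‖ : ℂ)⁻¹) • (B - Q₂)) (E k)) ∧
      IsMatRieszBasis (fun k => ((-Complex.I * (‖B‖ : ℂ)⁻¹) • (B + Q₂)) (E k)) :=
  stmt_17_general μ s r T Q₁ Q₂ A B hTadj hA hB hA0 hB0 hQ1pos hQ1 hQ2pos hQ2 E hE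
end
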